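/- arXiv:1808.02247 — 13 statements merged into one kernel-verified Lean document; each statement's English description precedes it below -/
import Mathlib

section
/- If L = (x_1, ..., x_n) is a median order of a tournament T and (x_j, x_i) is an arc of T with i < j, then L is also a median order of the tournament T' obtained from T by reversing this arc, i.e., T' has vertex set V(T) and arc set (E(T) \ {(x_j,x_i)}) ∪ {(x_i,x_j)}. -/
variable {V : Type*}

/-- An oriented graph: no loops or 2-cycles (asymmetric relation). -/
def Oriented (E : V → V → Prop) : Prop := ∀ u v : V, E u v → ¬ E v u

/-- A tournament: oriented and any two distinct vertices are joined by an arc. -/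
def Tournament (E : V → V → Prop) : Prop :=
  Oriented E ∧ ∀ u v : V, u ≠ v → E u v ∨ E v u

def outN (E : V → V → Prop) (v : V) : Set V := {u | E v u}

def inN (E : V → V → Prop) (v : V) : Set V := {u | E u v}

/-- The second out-neighborhood: vertices at directed distance exactly 2. -/
def secondN (E : V → V → Prop) (v : V) : Set V :=
  {u | ¬ E v u ∧ u ≠ v ∧ ∃ w, E v w ∧ E w u}

/-- `u` and `v` are distinct non-adjacent vertices (a missing edge). -/
def NonAdj (E : V → V → Prop) (u v : V) : Prop := u ≠ v ∧ ¬ E u v ∧ ¬ E v u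

/-- The missing edges form a matching: every vertex has at most one non-neighbor. -/
def MissingMatching (E : V → V → Prop) : Prop :=
  ∀ u v w : V, NonAdj E u v → NonAdj E u w → v = w

/-- A special arc `x ↠ y`: an arc such that `x` is not in the second
out-neighborhood of `y`. -/
def SpecialArc (E : V → V → Prop) (x y : V) : Prop :=
  E x y ∧ ¬ ∃ u, E y u ∧ E u x

/-- Number of forward arcs of an ordering (list) of the vertices. -/
noncomputable def fwd (E : V → V → Prop) (L : List V) : ℕ :=
  Set.ncard {p : ℕ × ℕ | p.1 < p.2 ∧ ∃ (h1 : p.1 < L.length) (h2 : p.2 < L.length),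
    E (L.get ⟨p.1, h1⟩) (L.get ⟨p.2, h2⟩)}

/-- A median order: an enumeration of all vertices maximizing the number of
forward arcs. -/
def MedianOrder (E : V → V → Prop) (L : List V) : Prop :=
  L.Nodup ∧ (∀ v : V, v ∈ L) ∧
    ∀ M : List V, M.Nodup → (∀ v : V, v ∈ M) → fwd E M ≤ fwd E L

/-- A module: any two vertices inside have the same in- and out-neighborhoods
outside. -/
def IsModule (E : V → V → Prop) (I : Set V) : Prop :=
  ∀ u ∈ I, ∀ v ∈ I, ∀ w, w ∉ I → (E u w ↔ E v w) ∧ (E w u ↔ E w v)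

/-- 2-degeneracy of the underlying undirected graph. -/
def TwoDegenerate (E : V → V → Prop) : Prop :=
  ∀ S : Set V, S.Nonempty → ∃ v ∈ S, Set.ncard {u | u ∈ S ∧ u ≠ v ∧ (E u v ∨ E v u)} ≤ 2

/-- The relation `(a,b) R (c,d)`: the 4-cycle `a → c ↠ b → d ↠ a`. -/
def Rrel (E : V → V → Prop) (a b c d : V) : Prop :=
  E a c ∧ SpecialArc E c b ∧ E b d ∧ SpecialArc E d a

lemma fwdSet_finite (E : V → V → Prop) (M : List V) :
    {p : ℕ × ℕ | p.1 < p.2 ∧ ∃ (h1 : p.1 < M.length) (h2 : p.2 < M.length),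
      E (M.get ⟨p.1, h1⟩) (M.get ⟨p.2, h2⟩)}.Finite := by
  apply Set.Finite.subset ((Set.finite_Iio M.length).prod (Set.finite_Iio M.length))
  rintro ⟨a, b⟩ ⟨-, h1, h2, -⟩
  exact ⟨h1, h2⟩

theorem stmt0 [Fintype V] (E : V → V → Prop) (hT : Tournament E)
    (L : List V) (hL : MedianOrder E L)
    {i j : ℕ} (hi : i < L.length) (hj : j < L.length) (hij : i < j)
    (harc : E (L.get ⟨j, hj⟩) (L.get ⟨i, hi⟩)) :
    MedianOrder (fun u v =>
      (E u v ∧ ¬(u = L.get ⟨j, hj⟩ ∧ v = L.get ⟨i, hi⟩)) ∨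
      (u = L.get ⟨i, hi⟩ ∧ v = L.get ⟨j, hj⟩)) L := by
  obtain ⟨hnd, hall, hmax⟩ := hL
  set E' : V → V → Prop := fun u v =>
      (E u v ∧ ¬(u = L.get ⟨j, hj⟩ ∧ v = L.get ⟨i, hi⟩)) ∨
      (u = L.get ⟨i, hi⟩ ∧ v = L.get ⟨j, hj⟩) with hE'def
  refine ⟨hnd, hall, fun M hMnd hMall => ?_⟩
  -- Step 1: fwd E L + 1 ≤ fwd E' L
  have hLstep : fwd E L + 1 ≤ fwd E' L := by
    have hsub : insert ((i, j) : ℕ × ℕ)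
        {p : ℕ × ℕ | p.1 < p.2 ∧ ∃ (h1 : p.1 < L.length) (h2 : p.2 < L.length),
          E (L.get ⟨p.1, h1⟩) (L.get ⟨p.2, h2⟩)} ⊆
        {p : ℕ × ℕ | p.1 < p.2 ∧ ∃ (h1 : p.1 < L.length) (h2 : p.2 < L.length),
          E' (L.get ⟨p.1, h1⟩) (L.get ⟨p.2, h2⟩)} := by
      rintro ⟨a, b⟩ hp
      rcases hp with hp | ⟨hab, h1, h2, hE⟩
      · obtain ⟨rfl, rfl⟩ := Prod.mk.injEq .. ▸ hp
        exact ⟨hij, hi, hj, Or.inr ⟨rfl, rfl⟩⟩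
      · refine ⟨hab, h1, h2, Or.inl ⟨hE, ?_⟩⟩
        rintro ⟨hy, hx⟩
        have ha : a = j := by
          have := (List.Nodup.get_inj_iff hnd).mp hy
          exact congrArg Fin.val this
        have hb : b = i := by
          have := (List.Nodup.get_inj_iff hnd).mp hx
          exact congrArg Fin.val this
        omega
    have hnotmem : ((i, j) : ℕ × ℕ) ∉
        {p : ℕ × ℕ | p.1 < p.2 ∧ ∃ (h1 : p.1 < L.length) (h2 : p.2 < L.length),
          E (L.get ⟨p.1, h1⟩) (L.get ⟨p.2, h2⟩)} := by
      rintro ⟨-, h1, h2, hE⟩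
      exact hT.1 _ _ harc hE
    have hins : (insert ((i, j) : ℕ × ℕ)
        {p : ℕ × ℕ | p.1 < p.2 ∧ ∃ (h1 : p.1 < L.length) (h2 : p.2 < L.length),
          E (L.get ⟨p.1, h1⟩) (L.get ⟨p.2, h2⟩)}).ncard = fwd E L + 1 :=
      Set.ncard_insert_of_notMem hnotmem (fwdSet_finite E L)
    calc fwd E L + 1 = _ := hins.symm
      _ ≤ fwd E' L := Set.ncard_le_ncard hsub (fwdSet_finite E' L)
  -- Step 2: fwd E' M ≤ fwd E M + 1
  have hMstep : fwd E' M ≤ fwd E M + 1 := by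
    obtain ⟨a, ha⟩ := List.mem_iff_get.mp (hMall (L.get ⟨j, hj⟩))
    obtain ⟨b, hb⟩ := List.mem_iff_get.mp (hMall (L.get ⟨i, hi⟩))
    have hsub : {p : ℕ × ℕ | p.1 < p.2 ∧ ∃ (h1 : p.1 < M.length) (h2 : p.2 < M.length),
          E' (M.get ⟨p.1, h1⟩) (M.get ⟨p.2, h2⟩)} ⊆
        insert ((b.1, a.1) : ℕ × ℕ)
          {p : ℕ × ℕ | p.1 < p.2 ∧ ∃ (h1 : p.1 < M.length) (h2 : p.2 < M.length),
            E (M.get ⟨p.1, h1⟩) (M.get ⟨p.2, h2⟩)} := by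
      rintro ⟨c, d⟩ ⟨hcd, h1, h2, hE⟩
      rcases hE with ⟨hE, -⟩ | ⟨hx, hy⟩
      · exact Or.inr ⟨hcd, h1, h2, hE⟩
      · left
        have hc : c = b.1 := by
          have : M.get ⟨c, h1⟩ = M.get b := hx.trans hb.symm
          exact congrArg Fin.val ((List.Nodup.get_inj_iff hMnd).mp this)
        have hd : d = a.1 := by
          have : M.get ⟨d, h2⟩ = M.get a := hy.trans ha.symm
          exact congrArg Fin.val ((List.Nodup.get_inj_iff hMnd).mp this)
        simp [hc, hd]
    calc fwd E' M ≤ _ := Set.ncard_le_ncard hsub ((fwdSet_finite E M).insert _)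
      _ ≤ fwd E M + 1 := Set.ncard_insert_le _ _
  exact hMstep.trans (Nat.add_le_add_right (hmax M hMnd hMall) 1 |>.trans hLstep)
end

section
/- Let G be an oriented graph, S a module in G, and u ∈ S. Let G' be the induced subgraph of G obtained by deleting S \ {u}. Then the second out-neighborhood of u in G' equals the second out-neighborhood of u in G minus S, i.e., N⁺⁺_{G'}(u) = N⁺⁺_G(u) \ S. -/
variable {V : Type*}

theorem stmt1 (E : V → V → Prop) (hO : Oriented E)
    (S : Set V) (hS : IsModule E S) (u : V) (hu : u ∈ S) :
    {w | w ∈ Sᶜ ∪ {u} ∧ ¬ E u w ∧ w ≠ u ∧ ∃ z ∈ Sᶜ ∪ ({u} : Set V), E u z ∧ E z w}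
      = secondN E u \ S := by
  ext w
  constructor
  · rintro ⟨hw, hnE, hne, z, hz, huz, hzw⟩
    refine ⟨⟨hnE, hne, z, huz, hzw⟩, ?_⟩
    rcases hw with h | h
    · exact h
    · exact absurd h hne
  · rintro ⟨⟨hnE, hne, z, huz, hzw⟩, hwS⟩
    have hzS : z ∉ S := fun hzS =>
      hnE (((hS z hzS u hu w hwS).1).mp hzw)
    exact ⟨Or.inl hwS, hnE, hne, z, Or.inl hzS, huz, hzw⟩
end

section
/- Let G be an oriented graph and S a module in G. Then for any two vertices u, v ∈ S, N⁺⁺_G(u) \ S = N⁺⁺_G(v) \ S. -/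
variable {V : Type*}

theorem stmt2 (E : V → V → Prop) (hO : Oriented E)
    (S : Set V) (hS : IsModule E S) (u v : V) (hu : u ∈ S) (hv : v ∈ S) :
    secondN E u \ S = secondN E v \ S := by
  have key : ∀ a ∈ S, ∀ b ∈ S, ∀ w, w ∉ S → w ∈ secondN E a → w ∈ secondN E b := by
    intro a ha b hb w hw ⟨hnaw, hwa, x, hax, hxw⟩
    refine ⟨?_, ?_, ?_⟩
    · intro hbw; exact hnaw (((hS a ha b hb w hw).1).mpr hbw)
    · intro h; exact hw (h ▸ hb)
    · by_cases hx : x ∈ S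
      · exact absurd (((hS x hx a ha w hw).1).mp hxw) hnaw
      · exact ⟨x, ((hS a ha b hb x hx).1).mp hax, hxw⟩
  ext w
  simp only [Set.mem_diff]
  exact ⟨fun ⟨h1, h2⟩ => ⟨key u hu v hv w h2 h1, h2⟩,
    fun ⟨h1, h2⟩ => ⟨key v hv u hu w h2 h1, h2⟩⟩
end

section
/- Let G be an oriented graph obtained from a tournament by deleting a (possibly empty) matching, and let C = a_0 → a_1 ↠ a_2 ↠ ... ↠ a_{k-1} → a_0 be a cycle in G whose arcs (a_1,a_2), ..., (a_{k-2},a_{k-1}) are all special arcs. Then a_0 has a non-neighbor in C, i.e., there exists i with 1 ≤ i ≤ k-1 such that neither (a_0,a_i) nor (a_i,a_0) is an arc of G. -/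
variable {V : Type*}

theorem stmt3 (E : V → V → Prop) (hO : Oriented E) (hM : MissingMatching E)
    (k : ℕ) (hk : 3 ≤ k) (a : ℕ → V)
    (hinj : ∀ i j, i < k → j < k → a i = a j → i = j)
    (h0 : E (a 0) (a 1))
    (hspec : ∀ i, 1 ≤ i → i < k - 1 → SpecialArc E (a i) (a (i + 1)))
    (hlast : E (a (k - 1)) (a 0)) :
    ∃ i, 1 ≤ i ∧ i ≤ k - 1 ∧ NonAdj E (a 0) (a i) := by
  by_contra hcon
  push_neg at hcon
  have hadj : ∀ i, 1 ≤ i → i ≤ k - 1 → E (a 0) (a i) ∨ E (a i) (a 0) := by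
    intro i h1 h2
    have hne : a 0 ≠ a i := by
      intro h
      have := hinj 0 i (by omega) (by omega) h
      omega
    have hni := hcon i h1 h2
    unfold NonAdj at hni
    tauto
  have key : ∀ i, 1 ≤ i → i ≤ k - 1 → E (a 0) (a i) := by
    intro i
    induction i with
    | zero => omega
    | succ n ih =>
      intro h1 h2
      rcases Nat.eq_zero_or_pos n with hn0 | hn1
      · subst hn0; exact h0
      · have ihn : E (a 0) (a n) := ih hn1 (by omega)
        have hs := hspec n hn1 (by omega)
        rcases hadj (n + 1) h1 h2 with h | h
        · exact h
        · exact absurd ⟨a 0, h, ihn⟩ hs.2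
  exact hO _ _ (key (k - 1) (by omega) le_rfl) hlast
end

section
/- Let G be an oriented graph obtained from a tournament by deleting a matching. If C = a_0 ↠ a_1 ↠ ... ↠ a_{k-1} ↠ a_0 is a special cycle in G (all arcs special), then k is even. -/
variable {V : Type*}

theorem stmt4 (E : V → V → Prop) (hO : Oriented E) (hM : MissingMatching E)
    (k : ℕ) (hk : 3 ≤ k) (a : ℕ → V)
    (hinj : ∀ i j, i < k → j < k → a i = a j → i = j)
    (hcyc : ∀ i, i < k → SpecialArc E (a i) (a ((i + 1) % k))) :
    Even k := by
  classical
  have hk0 : 0 < k := by omega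
  set c : ℕ → V := fun i => a (i % k) with hc
  have hmod : ∀ i, c (i % k) = c i := by
    intro i; simp only [hc, Nat.mod_mod_of_dvd _ (dvd_refl k)]
  have hcl : ∀ i, i % k < k := fun i => Nat.mod_lt i hk0
  have harc' : ∀ i, E (c i) (c (i + 1)) := by
    intro i
    have h := (hcyc (i % k) (hcl i)).1
    have he : (i + 1) % k = (i % k + 1) % k := by
      conv_lhs => rw [Nat.add_mod, Nat.mod_eq_of_lt (show 1 < k by omega)]
    simpa only [hc, he] using h
  have hspec' : ∀ i u, E (c (i + 1)) u → E u (c i) → False := by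
    intro i u h1 h2
    have h := (hcyc (i % k) (hcl i)).2
    have he : (i + 1) % k = (i % k + 1) % k := by
      conv_lhs => rw [Nat.add_mod, Nat.mod_eq_of_lt (show 1 < k by omega)]
    exact h ⟨u, by simpa only [hc, he] using h1, h2⟩
  have cinj : ∀ i j, c i = c j → i % k = j % k := fun i j h =>
    hinj _ _ (hcl i) (hcl j) h
  have cne : ∀ i d, 0 < d → d < k → c i ≠ c (i + d) := by
    intro i d hd1 hd2 h
    have h2 := cinj i (i + d) h
    have h3 : k ∣ i + d - i :=
      (Nat.modEq_iff_dvd' (Nat.le_add_right i d)).mp h2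
    rw [Nat.add_sub_cancel_left] at h3
    exact absurd (Nat.le_of_dvd hd1 h3) (by omega)
  have cperiod : ∀ i, c (i + k) = c i := by
    intro i
    show a ((i + k) % k) = a (i % k)
    rw [Nat.add_mod_right]
  have h1 : ∀ i, ¬ E (c (i + 2)) (c i) := by
    intro i h
    exact hspec' i (c (i + 2))
      (by have := harc' (i + 1); rwa [show i + 1 + 1 = i + 2 by omega] at this) h
  have hchain : ∀ n d i, k - 1 - d = n → 2 ≤ d → d ≤ k - 1 → E (c i) (c (i + d)) →
      ∃ e, 0 < e ∧ e < k ∧ NonAdj E (c i) (c (i + e)) := by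
    intro n
    induction n with
    | zero =>
      intro d i h0 h2 hdk hE
      have hd : d = k - 1 := by omega
      subst hd
      have harc2 := harc' (i + (k - 1))
      rw [show i + (k - 1) + 1 = i + k by omega, cperiod] at harc2
      exact absurd hE (hO _ _ harc2)
    | succ n ih =>
      intro d i h0 h2 hdk hE
      have hne : c i ≠ c (i + (d + 1)) := cne i (d + 1) (by omega) (by omega)
      have hnot : ¬ E (c (i + (d + 1))) (c i) := by
        intro h
        exact hspec' (i + d) (c i)
          (by rwa [show i + d + 1 = i + (d + 1) by omega]) hE
      by_cases hE2 : E (c i) (c (i + (d + 1)))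
      · exact ih (d + 1) i (by omega) (by omega) (by omega) hE2
      · exact ⟨d + 1, by omega, by omega, hne, hE2, hnot⟩
  have hnonall : ∀ i, ∃ e, 0 < e ∧ e < k ∧ NonAdj E (c i) (c (i + e)) := by
    intro i
    by_cases h : E (c i) (c (i + 2))
    · exact hchain (k - 1 - 2) 2 i rfl le_rfl (by omega) h
    · exact ⟨2, by omega, by omega, cne i 2 (by omega) (by omega), h, h1 i⟩
  -- extract the non-neighbor function
  choose e he0 hek hnadj using hnonall
  set σ : ℕ → ℕ := fun i => (i + e i) % k with hσ
  have hσlt : ∀ i, σ i < k := fun i => hcl _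
  have hσc : ∀ i, c (σ i) = c (i + e i) := fun i => hmod _
  have hσnadj : ∀ i, NonAdj E (c i) (c (σ i)) := by
    intro i; rw [hσc]; exact hnadj i
  have hσne : ∀ i, i < k → σ i ≠ i := by
    intro i hi hcontra
    exact (hσnadj i).1 (by rw [hcontra])
  have hσinv : ∀ i, i < k → σ (σ i) = i := by
    intro i hi
    have h1 : NonAdj E (c (σ i)) (c i) := by
      obtain ⟨hne, ha, hb⟩ := hσnadj i
      exact ⟨hne.symm, hb, ha⟩
    have h2 : NonAdj E (c (σ i)) (c (σ (σ i))) := hσnadj (σ i)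
    have h3 : c i = c (σ (σ i)) := hM _ _ _ h1 h2
    have h4 := cinj _ _ h3
    rw [Nat.mod_eq_of_lt hi, Nat.mod_eq_of_lt (hσlt (σ i))] at h4
    exact h4.symm
  -- parity via sum in ZMod 2
  have hsum : ∑ _x ∈ Finset.range k, (1 : ZMod 2) = 0 := by
    apply Finset.sum_involution (fun i _ => σ i)
    · intro x _; decide
    · intro x _ _
      exact hσne x (Finset.mem_range.mp ‹x ∈ Finset.range k›)
    · intro x _; exact Finset.mem_range.mpr (hσlt x)
    · intro x hx; exact hσinv x (Finset.mem_range.mp hx)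
  rw [Finset.sum_const, Finset.card_range, nsmul_eq_mul, mul_one] at hsum
  have : (2 : ℕ) ∣ k := (ZMod.natCast_eq_zero_iff k 2).mp hsum
  exact even_iff_two_dvd.mpr this
end

section
/- Let G be an oriented graph obtained from a tournament by deleting a matching and let C = a_0 ↠ a_1 ↠ ... ↠ a_{k-1} ↠ a_0 be a special cycle in G. Then for each i, the unique non-neighbor of a_i in G is a_{i+k/2} (indices modulo k). -/
variable {V : Type*}

/-!
Give every vertex `a_i` of the cycle its partner: the first `a_{i+s}` (`s ≥ 1`) that `a_i` does
not dominate. It is a non-neighbor of `a_i`, since `a_i` dominates `a_{i+s-1} ↠ a_{i+s}`, so by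
the matching hypothesis the partner map `p` is a fixed-point-free involution, and `a_i` dominates
the whole open arc from `i` to `p i`. If `j` lies on that arc, then `p j` lies on the opposite arc
from `p i` to `i`: otherwise `i` dominates both `j` and `p j`, while the two arcs of `j` cover `i`,
so one of `j`, `p j` dominates `i`. As `p` is injective, the arc from `i` to `p i` is no longer
than the opposite one, and by symmetry the two have the same length `k/2 - 1`.
-/

namespace ZMod

variable {k : ℕ} [NeZero k]

def openArc (x y : ZMod k) : Finset (ZMod k) :=
  Finset.univ.filter fun z => 0 < (z - x).val ∧ (z - x).val < (y - x).val

theorem mem_openArc {x y z : ZMod k} :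
    z ∈ openArc x y ↔ 0 < (z - x).val ∧ (z - x).val < (y - x).val := by
  simp [openArc]

theorem card_openArc (x y : ZMod k) : (openArc x y).card = (y - x).val - 1 := by
  rw [show (y - x).val - 1 = (Finset.Ioo 0 (y - x).val).card by simp]
  refine Finset.card_nbij' (fun z => (z - x).val) (fun s => x + s) ?_ ?_ ?_ ?_
  · intro z hz
    simpa [mem_openArc] using hz
  · intro s hs
    have hs : 0 < s ∧ s < (y - x).val := by simpa using hs
    have hsk : s < k := hs.2.trans (val_lt _)
    simpa [mem_openArc, val_cast_of_lt hsk] using hs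
  · intro z _
    simp
  · intro s hs
    have hs : 0 < s ∧ s < (y - x).val := by simpa using hs
    simp [val_cast_of_lt (hs.2.trans (val_lt _))]

theorem val_sub_add_val_sub {x y : ZMod k} (hxy : x ≠ y) : (y - x).val + (x - y).val = k := by
  have hne : y - x ≠ 0 := sub_ne_zero.mpr hxy.symm
  rw [show x - y = -(y - x) by ring, neg_val, if_neg hne]
  have := (y - x).val_lt
  omega

theorem mem_openArc_or_mem_openArc {x y z : ZMod k} (hxy : x ≠ y) (hzx : z ≠ x) (hzy : z ≠ y) :
    z ∈ openArc x y ∨ z ∈ openArc y x := by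
  simp only [mem_openArc]
  have hz := val_pos.mpr (sub_ne_zero.mpr hzx)
  have hzy' : (z - x).val ≠ (y - x).val := fun h =>
    hzy (sub_left_inj.mp (val_injective k h))
  rcases lt_or_gt_of_ne hzy' with hlt | hgt
  · exact Or.inl ⟨hz, hlt⟩
  · have hsub : z - y = (z - x) - (y - x) := by ring
    have hval : (z - y).val = (z - x).val - (y - x).val := by rw [hsub, val_sub hgt.le]
    have hsum := val_sub_add_val_sub hxy
    have := (z - x).val_lt
    right
    omega

theorem two_mul_val_sub_eq_of_involutive (R : ZMod k → ZMod k → Prop)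
    (hR : ∀ x y, R x y → ¬ R y x) {p : ZMod k → ZMod k} (hp : Function.Involutive p)
    (hfix : ∀ x, p x ≠ x) (harc : ∀ x, ∀ y ∈ openArc x (p x), R x y) (x : ZMod k) :
    2 * (p x - x).val = k := by
  have maps_to : ∀ x, Set.MapsTo p (openArc x (p x)) (openArc (p x) x) := by
    intro x y hy
    have hy' := mem_openArc.mp hy
    have hyx : y ≠ x := by rintro rfl; simp at hy'
    have hypx : y ≠ p x := by rintro rfl; exact hy'.2.false
    have hpyx : p y ≠ x := by rintro rfl; exact hypx (hp y).symm
    have hpypx : p y ≠ p x := fun h => hyx (hp.injective h)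
    refine (mem_openArc_or_mem_openArc (hfix x).symm hpyx hpypx).resolve_left fun hpy => ?_
    rcases mem_openArc_or_mem_openArc (hfix y).symm hyx.symm hpyx.symm with hx | hx
    · exact hR _ _ (harc x y hy) (harc y x hx)
    · exact hR _ _ (harc x (p y) hpy) (harc (p y) x (by rwa [hp y]))
  have hle := Finset.card_le_card_of_injOn p (maps_to x) hp.injective.injOn
  have hge := Finset.card_le_card_of_injOn p (maps_to (p x)) hp.injective.injOn
  rw [hp x] at hge
  rw [card_openArc, card_openArc] at hle hge
  have hsum := val_sub_add_val_sub (hfix x).symm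
  have hpos := val_pos.mpr (sub_ne_zero.mpr (hfix x))
  have hpos' := val_pos.mpr (sub_ne_zero.mpr (hfix x).symm)
  omega

end ZMod

open ZMod

theorem NonAdj.symm {E : V → V → Prop} {u v : V} (h : NonAdj E u v) : NonAdj E v u :=
  ⟨h.1.symm, h.2.2, h.2.1⟩

section SpecialCycle

variable {E : V → V → Prop} {k : ℕ} [NeZero k] {b : ZMod k → V}

theorem exists_nonAdj_forall_openArc_adj (hk : 1 < k) (hO : Oriented E)
    (hb : Function.Injective b) (hcyc : ∀ i, SpecialArc E (b i) (b (i + 1))) (x : ZMod k) :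
    ∃ y, NonAdj E (b x) (b y) ∧ ∀ z ∈ openArc x y, E (b x) (b z) := by
  classical
  have hlast : ¬ E (b x) (b (x + ((k - 1 : ℕ) : ZMod k))) := by
    refine fun h => hO _ _ h ?_
    have hpred : x + ((k - 1 : ℕ) : ZMod k) + 1 = x := by
      rw [Nat.cast_sub hk.le, natCast_self]; ring
    simpa [hpred] using (hcyc (x + ((k - 1 : ℕ) : ZMod k))).1
  have hex : ∃ s : ℕ, 0 < s ∧ ¬ E (b x) (b (x + s)) := ⟨k - 1, by omega, hlast⟩
  set s := Nat.find hex
  obtain ⟨hs0, hs⟩ : 0 < s ∧ ¬ E (b x) (b (x + s)) := Nat.find_spec hex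
  have hmin : ∀ m : ℕ, 0 < m → m < s → E (b x) (b (x + m)) := fun m hm0 hm =>
    not_not.mp fun h => Nat.find_min hex hm ⟨hm0, h⟩
  have hsk : s < k := by
    have := Nat.find_min' hex ⟨by omega, hlast⟩
    omega
  have hs1 : s ≠ 1 := by
    intro h
    rw [h, Nat.cast_one] at hs
    exact hs (hcyc x).1
  have hval : (x + (s : ZMod k) - x).val = s := by simp [val_cast_of_lt hsk]
  have hback : ¬ E (b (x + s)) (b x) := by
    intro h
    have hsucc : x + ((s - 1 : ℕ) : ZMod k) + 1 = x + s := by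
      rw [Nat.cast_sub hs0]; ring
    have hspecial := (hcyc (x + ((s - 1 : ℕ) : ZMod k))).2
    rw [hsucc] at hspecial
    exact hspecial ⟨b x, h, hmin (s - 1) (by omega) (by omega)⟩
  have hne : x ≠ x + s := fun h => by simp [← h] at hval; omega
  refine ⟨x + s, ⟨fun h => hne (hb h), hs, hback⟩, fun z hz => ?_⟩
  rw [mem_openArc, hval] at hz
  simpa using hmin _ hz.1 hz.2

theorem nonAdj_add_half_of_specialArc_cycle (hk : 1 < k) (hO : Oriented E)
    (hM : MissingMatching E) (hb : Function.Injective b)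
    (hcyc : ∀ i, SpecialArc E (b i) (b (i + 1))) (x : ZMod k) :
    NonAdj E (b x) (b (x + (k / 2 : ℕ))) := by
  choose p hp harc using exists_nonAdj_forall_openArc_adj hk hO hb hcyc
  have hinv : Function.Involutive p := fun y => hb (hM _ _ _ (hp (p y)) (hp y).symm)
  have hfix : ∀ y, p y ≠ y := fun y h => (hp y).1 (congrArg b h.symm)
  have hhalf := two_mul_val_sub_eq_of_involutive _ (fun y z => hO (b y) (b z)) hinv hfix harc x
  have hpx : p x = x + (k / 2 : ℕ) := by
    rw [← show (p x - x).val = k / 2 by omega, natCast_zmod_val]; ring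
  exact hpx ▸ hp x

end SpecialCycle

theorem stmt5 (E : V → V → Prop) (hO : Oriented E) (hM : MissingMatching E)
    (k : ℕ) (hk : 3 ≤ k) (a : ℕ → V)
    (hinj : ∀ i j, i < k → j < k → a i = a j → i = j)
    (hcyc : ∀ i, i < k → SpecialArc E (a i) (a ((i + 1) % k))) :
    ∀ i, i < k → NonAdj E (a i) (a ((i + k / 2) % k)) ∧
      ∀ w, NonAdj E (a i) w → w = a ((i + k / 2) % k) := by
  intro i hi
  have : NeZero k := ⟨by omega⟩
  have hb : Function.Injective fun x : ZMod k => a x.val := fun x y h =>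
    val_injective k (hinj _ _ x.val_lt y.val_lt h)
  have hcyc' : ∀ x : ZMod k, SpecialArc E (a x.val) (a (x + 1).val) := fun x => by
    rw [val_add, val_one_eq_one_mod, Nat.add_mod_mod]
    exact hcyc _ x.val_lt
  have key := nonAdj_add_half_of_specialArc_cycle (by omega) hO hM hb hcyc' (i : ZMod k)
  rw [← Nat.cast_add, val_natCast, val_natCast, Nat.mod_eq_of_lt hi] at key
  exact ⟨key, fun w hw => hM _ _ _ hw key⟩
end

section
/- Let G be an oriented graph obtained from a tournament by deleting a matching and let C be a special cycle in G. Then V(C) is a module in G: for any two vertices u, v of C, N⁺_G(u) \ V(C) = N⁺_G(v) \ V(C) and N⁻_G(u) \ V(C) = N⁻_G(v) \ V(C). -/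
variable {V : Type*}

theorem stmt6 (E : V → V → Prop) (hO : Oriented E) (hM : MissingMatching E)
    (k : ℕ) (hk : 3 ≤ k) (a : ℕ → V)
    (hinj : ∀ i j, i < k → j < k → a i = a j → i = j)
    (hcyc : ∀ i, i < k → SpecialArc E (a i) (a ((i + 1) % k))) :
    ∀ i, i < k → ∀ j, j < k → ∀ w, (¬ ∃ l, l < k ∧ a l = w) →
      (E (a i) w ↔ E (a j) w) ∧ (E w (a i) ↔ E w (a j)) := by
  intro i hi j hj w hw
  have haw : ∀ l, l < k → a l ≠ w := fun l hl h => hw ⟨l, hl, h⟩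
  have hk0 : 0 < k := by omega
  have hmodlt : ∀ n : ℕ, n % k < k := fun n => Nat.mod_lt _ hk0
  -- every cycle vertex is adjacent to w
  have hadj : ∀ m, m < k → E (a m) w ∨ E w (a m) := by
    intro m hm
    by_contra hno
    push_neg at hno
    have hnadj : NonAdj E (a m) w := ⟨haw m hm, hno.1, hno.2⟩
    have hadjcyc : ∀ l, l < k → l ≠ m → E (a m) (a l) ∨ E (a l) (a m) := by
      intro l hl hlm
      by_contra hno2
      push_neg at hno2
      exact haw l hl
        (hM (a m) (a l) w ⟨fun h => hlm (hinj l m hl hm h.symm), hno2.1, hno2.2⟩ hnadj)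
    have hne : ∀ t, 1 ≤ t → t < k → (m + t) % k ≠ m := by
      intro t h1 h2 heq
      have hmeq : m % k = (m + t) % k := by rw [heq, Nat.mod_eq_of_lt hm]
      have hd : k ∣ (m + t - m) := (Nat.modEq_iff_dvd' (by omega)).mp hmeq
      have hd' : k ∣ t := by simpa using hd
      have := Nat.le_of_dvd (by omega) hd'
      omega
    have key : ∀ t, 1 ≤ t → t < k → E (a m) (a ((m + t) % k)) := by
      intro t
      induction t with
      | zero => omega
      | succ n ih =>
        intro h1 h2
        rcases Nat.eq_zero_or_pos n with hn | hn
        · subst hn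
          have : (m + 1) % k = (m + 1) % k := rfl
          exact (hcyc m hm).1
        · have hE : E (a m) (a ((m + n) % k)) := ih (by omega) (by omega)
          have hsp := hcyc ((m + n) % k) (hmodlt _)
          have hmod : ((m + n) % k + 1) % k = (m + (n + 1)) % k := by
            rw [Nat.mod_add_mod, Nat.add_assoc]
          have hnot : ¬ E (a ((m + (n + 1)) % k)) (a m) := by
            intro hE2
            exact hsp.2 ⟨a m, by rw [hmod]; exact hE2, hE⟩
          rcases hadjcyc ((m + (n + 1)) % k) (hmodlt _) (hne (n + 1) (by omega) h2) with h' | h'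
          · exact h'
          · exact absurd h' hnot
    have hlast := key (k - 1) (by omega) (by omega)
    have hmodf : ((m + (k - 1)) % k + 1) % k = m := by
      rw [Nat.mod_add_mod, Nat.add_assoc]
      have h1 : k - 1 + 1 = k := by omega
      rw [h1, Nat.add_mod_right, Nat.mod_eq_of_lt hm]
    have hcyc2 := (hcyc ((m + (k - 1)) % k) (hmodlt _)).1
    rw [hmodf] at hcyc2
    exact hO _ _ hlast hcyc2
  -- propagation of in-neighborhood type around the cycle
  have hBstep : ∀ m, m < k → E w (a m) → E w (a ((m + 1) % k)) := by
    intro m hm hB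
    have hsp := hcyc m hm
    have hnot : ¬ E (a ((m + 1) % k)) w := fun h => hsp.2 ⟨w, h, hB⟩
    rcases hadj ((m + 1) % k) (hmodlt _) with h | h
    · exact absurd h hnot
    · exact h
  have hBall : (∃ l, l < k ∧ E w (a l)) → ∀ p, p < k → E w (a p) := by
    rintro ⟨l, hl, hB⟩ p hp
    have key : ∀ t, E w (a ((l + t) % k)) := by
      intro t
      induction t with
      | zero => simpa [Nat.mod_eq_of_lt hl] using hB
      | succ n ih =>
        have hstep := hBstep ((l + n) % k) (hmodlt _) ih
        have hmod : ((l + n) % k + 1) % k = (l + (n + 1)) % k := by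
          rw [Nat.mod_add_mod, Nat.add_assoc]
        rwa [hmod] at hstep
    have hkey := key (p + k - l)
    have hmod : (l + (p + k - l)) % k = p := by
      have h1 : l + (p + k - l) = p + k := by omega
      rw [h1, Nat.add_mod_right, Nat.mod_eq_of_lt hp]
    rwa [hmod] at hkey
  by_cases hB : ∃ l, l < k ∧ E w (a l)
  · have hi' := hBall hB i hi
    have hj' := hBall hB j hj
    exact ⟨⟨fun h => absurd hi' (hO _ _ h), fun h => absurd hj' (hO _ _ h)⟩,
      ⟨fun _ => hj', fun _ => hi'⟩⟩
  · push_neg at hB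
    have hA : ∀ l, l < k → E (a l) w := by
      intro l hl
      rcases hadj l hl with h | h
      · exact h
      · exact absurd h (hB l hl)
    exact ⟨⟨fun _ => hA j hj, fun _ => hA i hi⟩,
      ⟨fun h => absurd h (hB i hi), fun h => absurd h (hB j hj)⟩⟩
end

section
/- Let G be an oriented graph obtained from a tournament by deleting a matching, and let C be a special cycle in G. Then for every vertex u on C, |N⁺_G(u) ∩ V(C)| = |N⁺⁺_G(u) ∩ V(C)|. -/
variable {V : Type*}

theorem stmt7 (E : V → V → Prop) (hO : Oriented E) (hM : MissingMatching E)
    (k : ℕ) (hk : 3 ≤ k) (a : ℕ → V)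
    (hinj : ∀ i j, i < k → j < k → a i = a j → i = j)
    (hcyc : ∀ i, i < k → SpecialArc E (a i) (a ((i + 1) % k))) :
    ∀ i, i < k →
      Set.ncard (outN E (a i) ∩ {v | ∃ l, l < k ∧ a l = v}) =
      Set.ncard (secondN E (a i) ∩ {v | ∃ l, l < k ∧ a l = v}) := by
  classical
  have h0 : 0 < k := by omega
  -- the cyclic enumeration
  set b : ℕ → V := fun n => a (n % k) with hbdef
  have hbmod : ∀ m n : ℕ, m % k = n % k → b m = b n := by
    intro m n h; show a (m % k) = a (n % k); rw [h]
  have hb_injmod : ∀ m n : ℕ, b m = b n → m % k = n % k := fun m n h =>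
    hinj _ _ (Nat.mod_lt _ h0) (Nat.mod_lt _ h0) h
  have hbk : ∀ n, b (n + k) = b n := fun n => hbmod _ _ (Nat.add_mod_right n k)
  have hbshift : ∀ m n, b (m + n % k) = b (m + n) := fun m n =>
    hbmod _ _ ((Nat.mod_modEq n k).add_left m)
  have hcancel : ∀ n j j' : ℕ, b (n + j) = b (n + j') → j % k = j' % k := by
    intro n j j' h
    exact Nat.ModEq.add_left_cancel' n
      (show Nat.ModEq k (n + j) (n + j') from hb_injmod _ _ h)
  have hne : ∀ n j, 1 ≤ j → j ≤ k - 1 → b (n + j) ≠ b n := by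
    intro n j h1 h2 h
    have hm : b (n + j) = b (n + 0) := by rw [h]; congr 1
    have hc := hcancel n j 0 hm
    have hdvd : k ∣ j := (Nat.modEq_zero_iff_dvd).1 hc
    have := Nat.le_of_dvd (by omega) hdvd
    omega
  -- the cycle arcs, transported to b
  have hbcycS : ∀ n, SpecialArc E (b n) (b (n + 1)) := by
    intro n
    have hsp := hcyc (n % k) (Nat.mod_lt n h0)
    have h1 : (n % k + 1) % k = (n + 1) % k := by
      rw [Nat.add_mod n 1 k, Nat.mod_eq_of_lt (show 1 < k by omega)]
    show SpecialArc E (a (n % k)) (a ((n + 1) % k))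
    rwa [← h1]
  have hbE : ∀ n, E (b n) (b (n + 1)) := fun n => (hbcycS n).1
  have hbS : ∀ n, ¬ ∃ z, E (b (n + 1)) z ∧ E z (b n) := fun n => (hbcycS n).2
  -- the "first non-out-neighbor" function d
  have hPk2 : ∀ n, ¬ E (b n) (b (n + (k - 2) + 1)) := by
    intro n
    have hE := hbE (n + (k - 1))
    rw [show n + (k - 1) + 1 = (n + k) from by omega, hbk] at hE
    have := hO _ _ hE
    rwa [show n + (k - 2) + 1 = n + (k - 1) from by omega]
  have hex : ∀ n, ∃ j, ¬ E (b n) (b (n + j + 1)) := fun n => ⟨k - 2, hPk2 n⟩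
  set d : ℕ → ℕ := fun n => Nat.find (hex n) with hddef
  have hd1 : ∀ n, ¬ E (b n) (b (n + d n + 1)) := fun n => Nat.find_spec (hex n)
  have hd2 : ∀ n j, j < d n → E (b n) (b (n + j + 1)) := fun n j hj =>
    not_not.1 (Nat.find_min (hex n) hj)
  have hdle : ∀ n, d n ≤ k - 2 := fun n => Nat.find_min' (hex n) (hPk2 n)
  have hdpos : ∀ n, 1 ≤ d n := by
    intro n
    rcases Nat.eq_zero_or_pos (d n) with h | h
    · exfalso; apply hd1 n; rw [h]; exact hbE n
    · exact h
  have hpre : ∀ n l, 1 ≤ l → l ≤ d n → E (b n) (b (n + l)) := by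
    intro n l h1 h2
    have := hd2 n (l - 1) (by omega)
    rwa [show n + (l - 1) + 1 = n + l from by omega] at this
  -- the unique non-neighbor
  have hnadj : ∀ n, NonAdj E (b n) (b (n + d n + 1)) := by
    intro n
    refine ⟨(hne n (d n + 1) (by omega) (by have := hdle n; omega)).symm, hd1 n, ?_⟩
    intro h
    exact hbS (n + d n) ⟨b n, h, hpre n (d n) (hdpos n) le_rfl⟩
  have hdle3 : ∀ n, d n ≤ k - 3 := by
    intro n
    by_contra h
    have h2 := hdle n
    have he : d n = k - 2 := by omega
    apply (hnadj n).2.2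
    rw [he, show n + (k - 2) + 1 = n + (k - 1) from by omega]
    have hE := hbE (n + (k - 1))
    rwa [show n + (k - 1) + 1 = n + k from by omega, hbk n] at hE
  -- after the non-neighbor, everything is an in-neighbor
  have hCnot : ∀ n c j, j + c = k - 1 → d n + 2 ≤ j → ¬ E (b n) (b (n + j)) := by
    intro n c
    induction c with
    | zero =>
      intro j hj _ hE
      have hE' := hbE (n + (k - 1))
      rw [show n + (k - 1) + 1 = n + k from by omega, hbk n] at hE'
      rw [show j = k - 1 from by omega] at hE
      exact hO _ _ hE' hE
    | succ c ih =>
      intro j hj hdj hE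
      have hnE1 : ¬ E (b (n + j + 1)) (b n) := fun h => hbS (n + j) ⟨b n, h, hE⟩
      have hne1 : b (n + (j + 1)) ≠ b n := hne n (j + 1) (by omega) (by omega)
      by_cases hE2 : E (b n) (b (n + (j + 1)))
      · exact ih (j + 1) (by omega) (by omega) hE2
      · have hna : NonAdj E (b n) (b (n + (j + 1))) :=
          ⟨hne1.symm, hE2, by rwa [show n + (j + 1) = n + j + 1 from by omega]⟩
        have heq := hM _ _ _ hna (hnadj n)
        have hc := hcancel n (j + 1) (d n + 1) heq
        rw [Nat.mod_eq_of_lt (by omega), Nat.mod_eq_of_lt (by have := hdle n; omega)] at hc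
        omega
  have hC : ∀ n j, d n + 2 ≤ j → j ≤ k - 1 → E (b (n + j)) (b n) := by
    intro n j h1 h2
    have hnE := hCnot n (k - 1 - j) j (by omega) h1
    by_contra hE2
    have hna : NonAdj E (b n) (b (n + j)) := ⟨(hne n j (by omega) h2).symm, hnE, hE2⟩
    have heq := hM _ _ _ hna (hnadj n)
    have hc := hcancel n j (d n + 1) heq
    rw [Nat.mod_eq_of_lt (by omega), Nat.mod_eq_of_lt (by have := hdle n; omega)] at hc
    omega
  -- d is constant
  have hmono : ∀ n, d (n + 1) ≤ d n := by
    intro n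
    by_contra h
    push_neg at h
    apply hbS n
    refine ⟨b (n + d n + 2), ?_, ?_⟩
    · have := hpre (n + 1) (d n + 1) (by omega) (by omega)
      rwa [show n + 1 + (d n + 1) = n + d n + 2 from by omega] at this
    · have := hC n (d n + 2) le_rfl (by have := hdle3 n; omega)
      rwa [show n + (d n + 2) = n + d n + 2 from by omega] at this
  have hperiod : ∀ n, d (n + k) = d n := by
    intro n
    apply le_antisymm
    · apply Nat.find_min' (hex (n + k))
      rw [show n + k + d n + 1 = (n + d n + 1) + k from by omega, hbk, hbk]
      exact hd1 n
    · apply Nat.find_min' (hex n)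
      have h2 := hd1 (n + k)
      rwa [show n + k + d (n + k) + 1 = (n + d (n + k) + 1) + k from by omega, hbk, hbk] at h2
  have hchain : ∀ n j, d (n + j) ≤ d n := by
    intro n j
    induction j with
    | zero => exact le_rfl
    | succ j ih => exact le_trans (hmono (n + j)) ih
  have hstep : ∀ n, d (n + 1) = d n := by
    intro n
    refine le_antisymm (hmono n) ?_
    have h1 : d (n + k) ≤ d (n + 1) := by
      have := hchain (n + 1) (k - 1)
      rwa [show n + 1 + (k - 1) = n + k from by omega] at this
    rw [hperiod n] at h1
    exact h1
  have hconst : ∀ n, d n = d 0 := by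
    intro n
    induction n with
    | zero => rfl
    | succ m ih => rw [hstep m]; exact ih
  -- k = 2 * d 0 + 2
  set D := d 0 with hDdef
  have hD1 : 1 ≤ D := hdpos 0
  have hDk : D ≤ k - 3 := hdle3 0
  have hkD : k = 2 * D + 2 := by
    have h1 := hnadj 0
    rw [show (0 : ℕ) + d 0 + 1 = D + 1 from by omega] at h1
    have h2 := hnadj (D + 1)
    rw [hconst (D + 1)] at h2
    rw [show D + 1 + D + 1 = 2 * D + 2 from by omega] at h2
    have h1' : NonAdj E (b (D + 1)) (b 0) := ⟨h1.1.symm, h1.2.2, h1.2.1⟩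
    have h3 : b 0 = b (2 * D + 2) := hM _ _ _ h1' h2
    have hm0 : (0 : ℕ) % k = (2 * D + 2) % k := hb_injmod _ _ h3
    have hdvd : k ∣ 2 * D + 2 := by
      apply Nat.dvd_of_mod_eq_zero
      rw [← hm0, Nat.zero_mod]
    have hk1 : k ≤ 2 * D + 2 := Nat.le_of_dvd (by omega) hdvd
    rcases hdvd with ⟨c, hc⟩
    have hc1 : c = 1 := by
      rcases c with _ | _ | c
      · omega
      · rfl
      · have : k * 2 ≤ k * (c + 2) := Nat.mul_le_mul_left k (by omega)
        rw [← hc] at this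
        omega
    rw [hc1] at hc
    omega
  -- main argument
  intro i hik
  have hai : a i = b i := by
    show a i = a (i % k)
    rw [Nat.mod_eq_of_lt hik]
  have hdi : d i = D := hconst i
  -- decomposition of cycle vertices relative to i
  have hdecomp : ∀ l, l < k → ∃ j, j ≤ k - 1 ∧ b (i + j) = a l := by
    intro l hl
    refine ⟨(l + k - i) % k, by have := Nat.mod_lt (l + k - i) h0; omega, ?_⟩
    rw [hbshift, show i + (l + k - i) = l + k from by omega, hbk]
    show a (l % k) = a l
    rw [Nat.mod_eq_of_lt hl]
  have hinjb : ∀ j j', j < k → j' < k → b (i + j) = b (i + j') → j = j' := by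
    intro j j' hj hj' h
    have := hcancel i j j' h
    rwa [Nat.mod_eq_of_lt hj, Nat.mod_eq_of_lt hj'] at this
  have hCs : ∀ j : ℕ, b (i + j) ∈ {v | ∃ l, l < k ∧ a l = v} := by
    intro j
    exact ⟨(i + j) % k, Nat.mod_lt _ h0, rfl⟩
  -- Claim 1
  have hclaim1 : outN E (a i) ∩ {v | ∃ l, l < k ∧ a l = v}
      = (fun j => b (i + j)) '' Set.Icc 1 D := by
    ext v
    constructor
    · rintro ⟨hout, l, hl, rfl⟩
      obtain ⟨j, hjk, hbj⟩ := hdecomp l hl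
      have hcase : j = 0 ∨ (1 ≤ j ∧ j ≤ D) ∨ j = D + 1 ∨ (D + 2 ≤ j ∧ j ≤ k - 1) := by omega
      rcases hcase with h | h | h | h
      · exfalso
        rw [h] at hbj
        rw [show i + 0 = i from by omega] at hbj
        rw [← hbj, ← hai] at hout
        exact hO _ _ hout hout
      · exact ⟨j, ⟨h.1, h.2⟩, hbj⟩
      · exfalso
        apply hd1 i
        rw [hdi, show i + D + 1 = i + j from by omega, hbj, ← hai]
        exact hout
      · exfalso
        have := hC i j (by omega) h.2
        rw [hbj, ← hai] at this
        exact hO _ _ this hout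
    · rintro ⟨j, ⟨hj1, hj2⟩, rfl⟩
      refine ⟨?_, hCs j⟩
      show E (a i) (b (i + j))
      rw [hai]
      exact hpre i j hj1 (by omega)
  -- Claim 2
  have hclaim2 : secondN E (a i) ∩ {v | ∃ l, l < k ∧ a l = v}
      = (fun j => b (i + j)) '' Set.Icc (D + 1) (2 * D) := by
    ext v
    constructor
    · rintro ⟨⟨hnE, hneu, w, hw1, hw2⟩, l, hl, rfl⟩
      obtain ⟨j, hjk, hbj⟩ := hdecomp l hl
      have hcase : j = 0 ∨ (1 ≤ j ∧ j ≤ D) ∨ (D + 1 ≤ j ∧ j ≤ 2 * D) ∨ j = k - 1 := by omega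
      rcases hcase with h | h | h | h
      · exfalso
        apply hneu
        rw [h] at hbj
        rw [show i + 0 = i from by omega] at hbj
        rw [← hbj, hai]
      · exfalso
        apply hnE
        rw [hai, ← hbj]
        exact hpre i j h.1 (by omega)
      · exact ⟨j, ⟨h.1, h.2⟩, hbj⟩
      · exfalso
        apply hbS (i + (k - 1))
        refine ⟨w, ?_, ?_⟩
        · rw [show i + (k - 1) + 1 = i + k from by omega, hbk, ← hai]
          exact hw1
        · rw [← h, hbj]
          exact hw2
    · rintro ⟨j, ⟨hj1, hj2⟩, rfl⟩
      refine ⟨⟨?_, ?_, ⟨b (i + (j - D)), ?_, ?_⟩⟩, hCs j⟩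
      · -- ¬ E (a i) (b (i + j))
        rw [hai]
        rcases Nat.eq_or_lt_of_le hj1 with h | h
        · have := hd1 i
          rwa [hdi, show i + D + 1 = i + j from by omega] at this
        · exact hO _ _ (hC i j (by omega) (by omega))
      · -- b (i + j) ≠ a i
        rw [hai]
        exact hne i j (by omega) (by omega)
      · rw [hai]
        exact hpre i (j - D) (by omega) (by omega)
      · have := hpre (i + (j - D)) D hD1 (by rw [hconst (i + (j - D))])
        rwa [show i + (j - D) + D = i + j from by omega] at this
  rw [hclaim1, hclaim2]
  rw [Set.ncard_image_of_injOn, Set.ncard_image_of_injOn]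
  · rw [← Finset.coe_Icc, Set.ncard_coe_finset, Nat.card_Icc,
      ← Finset.coe_Icc, Set.ncard_coe_finset, Nat.card_Icc]
    omega
  · intro x hx y hy h
    exact hinjb x y (by have := hx.2; simp only [Set.mem_Icc] at hx; omega)
      (by simp only [Set.mem_Icc] at hy; omega) h
  · intro x hx y hy h
    exact hinjb x y (by simp only [Set.mem_Icc] at hx; omega)
      (by simp only [Set.mem_Icc] at hy; omega) h
end

section
/- Let G be an oriented graph obtained from a tournament by deleting a matching. Define the auxiliary digraph Δ(G) on the missing edges of G, with an arc from {a,b} to {c,d} when (after suitable labeling) G contains the 4-cycle a → c ↠ b → d ↠ a where (c,b) and (d,a) are special arcs. Then every vertex of Δ(G) has out-degree at most 1 and in-degree at most 1. -/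
variable {V : Type*}

lemma key (E : V → V → Prop) (hO : Oriented E) (hM : MissingMatching E)
    {a b c d c' d' : V} (h2 : NonAdj E c d)
    (r1 : Rrel E a b c d) (r2 : Rrel E a b c' d' ∨ Rrel E a b d' c') :
    ({c, d} : Set V) = {c', d'} := by
  obtain ⟨hac, ⟨hcb, hcsp⟩, hbd, hda, hdsp⟩ := r1
  rcases r2 with ⟨hac', ⟨hc'b, hc'sp⟩, hbd', hd'a, hd'sp⟩ |
    ⟨had', ⟨hd'b, hd'sp⟩, hbc', hc'a, hc'sp⟩
  · -- c = c', d = d'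
    have hcc : c' = c := by
      refine (hM d c' c ⟨?_, ?_, ?_⟩ ⟨Ne.symm h2.1, h2.2.2, h2.2.1⟩)
      · rintro rfl; exact hO _ _ hac' hda
      · intro h; exact hc'sp ⟨d, hbd, h⟩
      · intro h; exact hdsp ⟨c', hac', h⟩
    have hdd : d' = d := by
      refine (hM c d' d ⟨?_, ?_, ?_⟩ h2)
      · rintro rfl; exact hO _ _ hcb hbd'
      · intro h; exact hd'sp ⟨c, hac, h⟩
      · intro h; exact hcsp ⟨d', hbd', h⟩
    rw [hcc, hdd]
  · -- c' = d, d' = c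
    have hdd : d' = c := by
      refine (hM d d' c ⟨?_, ?_, ?_⟩ ⟨Ne.symm h2.1, h2.2.2, h2.2.1⟩)
      · rintro rfl; exact hO _ _ had' hda
      · intro h; exact hd'sp ⟨d, hbd, h⟩
      · intro h; exact hdsp ⟨d', had', h⟩
    have hcc : c' = d := by
      refine (hM c c' d ⟨?_, ?_, ?_⟩ h2)
      · rintro rfl; exact hO _ _ hcb hbc'
      · intro h; exact hc'sp ⟨c, hac, h⟩
      · intro h; exact hcsp ⟨c', hbc', h⟩
    rw [hdd, hcc, Set.pair_comm]

lemma flipRrel (E : V → V → Prop) (a b c d : V) :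
    Rrel (fun x y => E y x) a b c d ↔ Rrel E c d a b := by
  unfold Rrel SpecialArc
  constructor <;> rintro ⟨h1, ⟨h2, h3⟩, h4, h5, h6⟩ <;>
    exact ⟨h1, ⟨h5, fun ⟨u, hu1, hu2⟩ => h6 ⟨u, hu2, hu1⟩⟩, h4,
      ⟨h2, fun ⟨u, hu1, hu2⟩ => h3 ⟨u, hu2, hu1⟩⟩⟩

lemma swapRrel (E : V → V → Prop) (a b c d : V) :
    Rrel E a b c d ↔ Rrel E b a d c := by
  unfold Rrel
  tauto

theorem stmt8 (E : V → V → Prop) (hO : Oriented E) (hM : MissingMatching E) :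
    (∀ a b c d c' d' : V, NonAdj E a b → NonAdj E c d → NonAdj E c' d' →
      (Rrel E a b c d ∨ Rrel E a b d c) →
      (Rrel E a b c' d' ∨ Rrel E a b d' c') →
      ({c, d} : Set V) = {c', d'}) ∧
    (∀ a b c d c' d' : V, NonAdj E a b → NonAdj E c d → NonAdj E c' d' →
      (Rrel E c d a b ∨ Rrel E c d b a) →
      (Rrel E c' d' a b ∨ Rrel E c' d' b a) →
      ({c, d} : Set V) = {c', d'}) := by
  constructor
  · intro a b c d c' d' hab hcd hcd' r1 r2
    rcases r1 with r1 | r1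
    · exact key E hO hM hcd r1 r2
    · rw [Set.pair_comm]
      exact key E hO hM ⟨Ne.symm hcd.1, hcd.2.2, hcd.2.1⟩ r1 r2
  · intro a b c d c' d' hab hcd hcd' r1 r2
    have hO' : Oriented (fun x y => E y x) := fun u v h h' => hO v u h h'
    have hM' : MissingMatching (fun x y => E y x) := fun u v w h1 h2 =>
      hM u v w ⟨h1.1, h1.2.2, h1.2.1⟩ ⟨h2.1, h2.2.2, h2.2.1⟩
    have r1' : Rrel (fun x y => E y x) a b c d ∨ Rrel (fun x y => E y x) a b d c :=
      r1.imp (flipRrel E a b c d).mpr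
        (fun h => (swapRrel _ b a c d).mp ((flipRrel E b a c d).mpr h))
    have r2' : Rrel (fun x y => E y x) a b c' d' ∨ Rrel (fun x y => E y x) a b d' c' :=
      r2.imp (flipRrel E a b c' d').mpr
        (fun h => (swapRrel _ b a c' d').mp ((flipRrel E b a c' d').mpr h))
    rcases r1' with r1' | r1'
    · exact key _ hO' hM' ⟨hcd.1, hcd.2.2, hcd.2.1⟩ r1' r2'
    · rw [Set.pair_comm]
      exact key _ hO' hM' ⟨Ne.symm hcd.1, hcd.2.1, hcd.2.2⟩ r1' r2'
end

section
/- Let G be an oriented graph obtained from a tournament by deleting a matching, and let a⋯b be a missing edge. If there exist vertices u, v with b ↠ v → a and a ↠ u → b, then u and v are non-neighbors of each other and G contains the 4-cycle u → b ↠ v → a ↠ u (i.e., (u,v)R(b,a)). -/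
variable {V : Type*}

theorem stmt9 (E : V → V → Prop) (hO : Oriented E) (hM : MissingMatching E)
    (a b u v : V) (hab : NonAdj E a b)
    (h1 : SpecialArc E b v) (h2 : E v a) (h3 : SpecialArc E a u) (h4 : E u b) :
    NonAdj E u v ∧ Rrel E u v b a := by
  refine ⟨⟨?_, ?_, ?_⟩, h4, h1, h2, h3⟩
  · rintro rfl; exact hO u b h4 h1.1
  · intro huv; exact h3.2 ⟨v, huv, h2⟩
  · intro hvu; exact h1.2 ⟨u, hvu, h4⟩
end

section
/- Every oriented graph whose missing edges form a matching contains a vertex v with |N⁺(v)| ≤ |N⁺⁺(v)|. -/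
variable {V : Type*}

/-!
This is the median-order argument of Havet and Thomassé. Order the vertices so as to maximise
the number of forward arcs. Every suffix of such an order is again one, and in such an order
`l₁ ++ u :: l₂` the vertex `u` has at most as many out-neighbours as in-neighbours in `l₁`;
when the two numbers agree, moving `u` to the front keeps the order median.

Let `f` be the last vertex; we induct on the length. If `|N⁺(f)| > |N⁺⁺(f)|`, then
`d⁺(f) ≤ d⁻(f)` yields a first vertex `u` outside `N⁺(f) ∪ N⁺⁺(f)`, and the induction
hypothesis on the suffix after `u` puts the deficit before `u`. There `u` beats every vertex
of `N⁺(f)` except at most one non-neighbour, and is beaten only by vertices of `N⁺⁺(f)`.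
Counting forces equality for `u` on that prefix, so `u` can be moved to the front and deleted;
the induction hypothesis for the shorter order ending in `f` is then contradicted.
-/

open Classical

namespace List

variable {α : Type*} {l : List α} {p q r : α → Bool}

theorem countP_eq_countP_and_add_countP_and_not (q : α → Bool) :
    l.countP p = l.countP (fun a => p a && q a) + l.countP (fun a => p a && !q a) := by
  rw [countP_eq_countP_filter_add l p q, countP_filter, countP_filter]

theorem countP_add_countP_le (hp : ∀ a ∈ l, p a → r a) (hq : ∀ a ∈ l, q a → r a)
    (hpq : ∀ a ∈ l, p a → ¬ q a) : l.countP p + l.countP q ≤ l.countP r := by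
  induction l with
  | nil => simp
  | cons a l ih =>
    have := ih (fun b hb => hp b (mem_cons_of_mem _ hb)) (fun b hb => hq b (mem_cons_of_mem _ hb))
      (fun b hb => hpq b (mem_cons_of_mem _ hb))
    have ha := mem_cons_self (a := a) (l := l)
    simp only [countP_cons]
    by_cases hpa : p a <;> by_cases hqa : q a <;> simp_all <;> (try split) <;> omega

theorem Nodup.countP_eq_ncard (hl : l.Nodup) : l.countP p = {a | a ∈ l ∧ p a}.ncard := by
  rw [countP_eq_length_filter, ← toFinset_card_of_nodup (hl.filter p), ← Set.ncard_coe_finset]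
  congr
  ext
  simp

theorem Nodup.countP_le_one (hl : l.Nodup) (h : ∀ a ∈ l, ∀ b ∈ l, p a → p b → a = b) :
    l.countP p ≤ 1 := by
  rw [hl.countP_eq_ncard, Set.ncard_le_one (l.finite_toSet.subset fun _ ha => ha.1)]
  exact fun a ha b hb => h a ha.1 b hb.1 ha.2 hb.2

theorem exists_eq_append_cons_of_exists (h : ∃ a ∈ l, p a) :
    ∃ l₁ a l₂, l = l₁ ++ a :: l₂ ∧ p a ∧ ∀ b ∈ l₁, ¬ p b := by
  obtain ⟨a, ha⟩ := Option.isSome_iff_exists.1 (find?_isSome.2 h)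
  obtain ⟨hpa, l₁, l₂, rfl, hfirst⟩ := find?_eq_some_iff_append.1 ha
  exact ⟨l₁, a, l₂, rfl, hpa, by simpa using hfirst⟩

end List

section MedianOrder

variable (E : V → V → Prop)

noncomputable def forwardArcs : List V → ℕ
  | [] => 0
  | x :: l => l.countP (E x ·) + forwardArcs l

def IsMedianList (L : List V) : Prop :=
  ∀ M : List V, M.Perm L → forwardArcs E M ≤ forwardArcs E L

variable {E}

theorem forwardArcs_append_cons_add (l₁ l₂ : List V) (u : V) :
    forwardArcs E (l₁ ++ u :: l₂) + l₁.countP (E u ·) =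
      forwardArcs E (u :: (l₁ ++ l₂)) + l₁.countP (E · u) := by
  induction l₁ with
  | nil => simp
  | cons a l₁ ih =>
    simp only [forwardArcs, List.cons_append, List.countP_append, List.countP_cons] at ih ⊢
    omega

theorem exists_perm_isMedianList (L : List V) : ∃ M : List V, M.Perm L ∧ IsMedianList E M := by
  obtain ⟨M, hM, hmax⟩ :=
    L.permutations.toFinset.exists_max_image (forwardArcs E) ⟨L, by simp⟩
  simp only [List.mem_toFinset, List.mem_permutations] at hM hmax
  exact ⟨M, hM, fun N hN => hmax N (hN.trans hM)⟩

namespace IsMedianList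

variable {l₁ l₂ : List V} {u : V}

theorem of_cons {x : V} {l : List V} (h : IsMedianList E (x :: l)) : IsMedianList E l := by
  intro M hM
  have := h (x :: M) (hM.cons x)
  simp only [forwardArcs, hM.countP_eq] at this
  omega

theorem of_append (h : IsMedianList E (l₁ ++ l₂)) : IsMedianList E l₂ := by
  induction l₁ with
  | nil => exact h
  | cons a l₁ ih => exact ih h.of_cons

theorem countP_out_le_countP_in (h : IsMedianList E (l₁ ++ u :: l₂)) :
    l₁.countP (E u ·) ≤ l₁.countP (E · u) := by
  have := h (u :: (l₁ ++ l₂)) List.perm_middle.symm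
  have := forwardArcs_append_cons_add (E := E) l₁ l₂ u
  omega

theorem cons_of_countP_out_eq_in (h : IsMedianList E (l₁ ++ u :: l₂))
    (heq : l₁.countP (E u ·) = l₁.countP (E · u)) : IsMedianList E (u :: (l₁ ++ l₂)) := by
  intro M hM
  have := h M (hM.trans List.perm_middle.symm)
  have := forwardArcs_append_cons_add (E := E) l₁ l₂ u
  omega

end IsMedianList

end MedianOrder

section SecondNeighborhood

variable {E : V → V → Prop}

/-- `u` plays the first vertex of a median order outside `N⁺(f) ∪ S`, and `l` the vertices
before it. By the matching condition at most one vertex of `N⁺(f) ∩ l` is not beaten by `u`. -/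
theorem countP_out_add_countP_in_le (hO : Oriented E) (hM : MissingMatching E) {f u : V}
    {S : V → Prop} {l : List V} (hl : l.Nodup) (hul : u ∉ l)
    (hS : ∀ y ∈ l, S y → ¬ E f y)
    (hcover : ∀ y ∈ l, E f y ∨ S y) (hdom : ∀ y ∈ l, E f y → ¬ E y u) :
    l.countP (E f ·) + l.countP (E · u) ≤ l.countP (S ·) + l.countP (E u ·) + 1 := by
  have hsplit := l.countP_eq_countP_and_add_countP_and_not (p := (E f ·)) (E u ·)
  have hnonadj : l.countP (fun y => E f y && !E u y) ≤ 1 := by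
    refine hl.countP_le_one fun a ha b hb hfa hfb => ?_
    simp only [Bool.and_eq_true, decide_eq_true_eq, Bool.not_eq_true', decide_eq_false_iff_not]
      at hfa hfb
    exact hM u a b ⟨fun h => hul (h ▸ ha), hfa.2, hdom a ha hfa.1⟩
      ⟨fun h => hul (h ▸ hb), hfb.2, hdom b hb hfb.1⟩
  have hout : l.countP (fun y => E f y && E u y) + l.countP (fun y => S y && E u y) ≤
      l.countP (E u ·) :=
    List.countP_add_countP_le (by simp_all) (by simp_all)
      (by simp only [Bool.and_eq_true, decide_eq_true_eq]; exact fun y hy h h' => hS y hy h'.1 h.1)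
  have hin : l.countP (E · u) ≤ l.countP (fun y => S y && E y u) :=
    List.countP_mono_left fun y hy hyu => by
      simp_all only [decide_eq_true_eq, Bool.and_eq_true, and_true]
      exact (hcover y hy).resolve_left fun hfy => hdom y hy hfy hyu
  have hsec : l.countP (fun y => S y && E u y) + l.countP (fun y => S y && E y u) ≤
      l.countP (S ·) :=
    List.countP_add_countP_le (by simp_all) (by simp_all)
      (by simp only [Bool.and_eq_true, decide_eq_true_eq]; exact fun y _ h h' => hO u y h.2 h'.2)
  omega

theorem IsMedianList.countP_out_le_countP_secondN (hO : Oriented E) (hM : MissingMatching E)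
    {f : V} {l : List V} (hnd : (l ++ [f]).Nodup) (hmed : IsMedianList E (l ++ [f])) :
    l.countP (E f ·) ≤ l.countP (· ∈ secondN E f) := by
  by_contra! hfail
  have hfl : f ∉ l := fun h => (List.nodup_append.1 hnd).2.2 f h f (List.mem_singleton_self f) rfl
  -- `f` is last, so `d⁺(f) ≤ d⁻(f)`, and every in-neighbour of `f` is a non-out-neighbour.
  have hbad : ∃ u ∈ l, ¬ E f u ∧ u ∉ secondN E f := by
    by_contra! hall
    have hfeed := hmed.countP_out_le_countP_in (l₂ := [])
    have hin : l.countP (E · f) ≤ l.countP (· ∈ secondN E f) :=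
      List.countP_mono_left fun y hy hyf => by
        simp only [decide_eq_true_eq] at hyf ⊢
        exact hall y hy fun hfy => hO y f hyf hfy
    omega
  obtain ⟨l₁, u, l₂, rfl, hu, hfirst⟩ := List.exists_eq_append_cons_of_exists
    (p := fun y => ¬ E f y ∧ y ∉ secondN E f) (by simpa using hbad)
  simp only [decide_eq_true_eq, not_and, not_not] at hu hfirst
  obtain ⟨hfu, husec⟩ := hu
  rw [List.append_assoc, List.cons_append] at hnd hmed
  have hnd' := List.nodup_middle.1 hnd
  have hsuffix := IsMedianList.countP_out_le_countP_secondN hO hM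
    (hnd.sublist (by simp)) hmed.of_append.of_cons
  have hlocal := countP_out_add_countP_in_le hO hM (S := (· ∈ secondN E f))
    (hnd.sublist (by simp)) (fun h => (List.nodup_cons.1 hnd').1 (List.mem_append_left _ h))
    (fun y _ hy => hy.1) (fun y hy => or_iff_not_imp_left.2 (hfirst y hy))
    (fun y _ hfy hyu => husec ⟨hfu, fun h => hfl (by simp [h]), y, hfy, hyu⟩)
  have hfeed := hmed.countP_out_le_countP_in
  simp only [List.countP_append, List.countP_cons, hfu, husec, decide_false] at hfail hsuffix
  -- With `hsuffix`, `hlocal` and `hfeed` are tight, so `u` may be moved to the front.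
  have hmed' := (hmed.cons_of_countP_out_eq_in (le_antisymm hfeed (by omega))).of_cons
  rw [← List.append_assoc] at hmed'
  have hprefix := IsMedianList.countP_out_le_countP_secondN hO hM
    (by simpa using hnd'.of_cons) hmed'
  simp only [List.countP_append] at hprefix
  omega
termination_by l.length

end SecondNeighborhood

theorem stmt10 [Fintype V] [Nonempty V] (E : V → V → Prop)
    (hO : Oriented E) (hM : MissingMatching E) :
    ∃ v : V, Set.ncard (outN E v) ≤ Set.ncard (secondN E v) := by
  obtain ⟨L, hperm, hmed⟩ := exists_perm_isMedianList (E := E) (Finset.univ : Finset V).toList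
  have hmem (v : V) : v ∈ L := hperm.mem_iff.2 (by simp)
  obtain ⟨l, f, rfl⟩ :=
    L.eq_nil_or_concat.resolve_left (List.ne_nil_of_mem (hmem (Classical.arbitrary V)))
  simp only [List.concat_eq_append] at hperm hmed hmem
  have hnd : (l ++ [f]).Nodup := hperm.nodup_iff.2 (Finset.nodup_toList _)
  have hl {v : V} (hv : v ≠ f) : v ∈ l := by simpa [hv] using hmem v
  have hout : {v | v ∈ l ∧ E f v} = outN E f :=
    Set.ext fun v => ⟨fun h => h.2, fun h => ⟨hl fun hv => hO f f (hv ▸ h) (hv ▸ h), h⟩⟩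
  have hsec : {v | v ∈ l ∧ v ∈ secondN E f} = secondN E f :=
    Set.ext fun v => ⟨fun h => h.2, fun h => ⟨hl h.2.1, h⟩⟩
  have hkey := hmed.countP_out_le_countP_secondN hO hM hnd
  rw [(hnd.sublist (by simp)).countP_eq_ncard, (hnd.sublist (by simp)).countP_eq_ncard] at hkey
  simp only [decide_eq_true_eq, hout, hsec] at hkey
  exact ⟨f, hkey⟩
end

section
/- Suppose that every oriented graph that has exactly one vertex v satisfying |N⁺(v)| ≤ |N⁺⁺(v)| has that vertex being a sink. Then every oriented graph contains a vertex v with |N⁺(v)| ≤ |N⁺⁺(v)|. -/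
variable {V : Type*}

/-- Extension of an oriented graph by a vertex `a = inr false` dominated by all of `V`
and a vertex `b = inr true` with `a → b` and `b` dominating all of `V`. -/
def extG (F : V → V → Prop) : V ⊕ Bool → V ⊕ Bool → Prop
  | .inl u, .inl v => F u v
  | .inl _, .inr c => c = false
  | .inr c, .inl _ => c = true
  | .inr c, .inr d => c = false ∧ d = true

lemma extG_oriented {F : V → V → Prop} (hF : Oriented F) : Oriented (extG F) := by
  rintro (u | c) (v | d) huv h2
  · exact hF u v huv h2
  all_goals simp_all [extG]

lemma extG_out_a (F : V → V → Prop) :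
    outN (extG F) (Sum.inr false) = {Sum.inr true} := by
  ext (u | c) <;> simp [outN, extG]

lemma extG_second_a (F : V → V → Prop) :
    secondN (extG F) (Sum.inr false) = Set.range Sum.inl := by
  ext (u | c)
  · simp only [secondN, Set.mem_setOf_eq, Set.mem_range]
    constructor
    · intro _; exact ⟨u, rfl⟩
    · rintro ⟨v, hv⟩
      refine ⟨by simp [extG], by simp, Sum.inr true, by simp [extG]⟩
  · constructor
    · rintro ⟨h1, h2, w, hw1, hw2⟩
      cases c <;> simp_all [extG]
    · rintro ⟨v, hv⟩; simp at hv

lemma extG_out_b (F : V → V → Prop) :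
    outN (extG F) (Sum.inr true) = Set.range Sum.inl := by
  ext (u | c) <;> simp [outN, extG]

lemma extG_second_b [Nonempty V] (F : V → V → Prop) :
    secondN (extG F) (Sum.inr true) = {Sum.inr false} := by
  ext (u | c)
  · constructor
    · rintro ⟨h1, _, _⟩; simp [extG] at h1
    · simp
  · cases c
    · refine iff_of_true ⟨?_, by simp, Sum.inl (Classical.arbitrary V), ?_, ?_⟩ rfl <;>
        simp [extG]
    · constructor
      · rintro ⟨_, h2, _⟩; exact absurd rfl h2
      · simp

lemma extG_out_w (F : V → V → Prop) (x : V) :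
    outN (extG F) (Sum.inl x) = insert (Sum.inr false) (Sum.inl '' outN F x) := by
  ext (u | c) <;> simp [outN, extG] <;> cases c <;> simp

lemma extG_second_w (F : V → V → Prop) (x : V) :
    secondN (extG F) (Sum.inl x) = insert (Sum.inr true) (Sum.inl '' secondN F x) := by
  ext (u | c)
  · simp only [secondN, Set.mem_setOf_eq, Set.mem_insert_iff, Set.mem_image]
    constructor
    · rintro ⟨h1, h2, (w | d), hw1, hw2⟩
      · exact Or.inr ⟨u, ⟨by simpa [extG] using h1, by simpa using h2, w,
          by simpa [extG] using hw1, by simpa [extG] using hw2⟩, rfl⟩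
      · simp [extG] at hw1 hw2; simp [hw1] at hw2
    · rintro (h | ⟨v, ⟨h1, h2, w, hw1, hw2⟩, hv⟩)
      · simp at h
      · cases hv
        exact ⟨by simpa [extG] using h1, by simpa using h2, Sum.inl w,
          by simpa [extG] using hw1, by simpa [extG] using hw2⟩
  · cases c
    · constructor
      · rintro ⟨h1, _, _⟩; simp [extG] at h1
      · rintro h
        rcases h with h | ⟨v, _, hv⟩ <;> simp_all
    · refine iff_of_true ⟨by simp [extG], by simp, Sum.inr false,
        by simp [extG], by simp [extG]⟩ (by simp)

theorem stmt16
    (h : ∀ (W : Type) [Fintype W] (F : W → W → Prop), Oriented F →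
      ∀ v : W, (Set.ncard (outN F v) ≤ Set.ncard (secondN F v) ∧
        ∀ w : W, Set.ncard (outN F w) ≤ Set.ncard (secondN F w) → w = v) →
      outN F v = ∅) :
    ∀ (W : Type) [Fintype W] [Nonempty W] (F : W → W → Prop), Oriented F →
      ∃ v : W, Set.ncard (outN F v) ≤ Set.ncard (secondN F v) := by
  intro W _ _ F hF
  by_contra hc
  push_neg at hc
  obtain ⟨v0⟩ := (inferInstance : Nonempty W)
  have h0 : (outN F v0).Nonempty :=
    Set.nonempty_of_ncard_ne_zero (by have := hc v0; omega)
  obtain ⟨u0, hu0⟩ := h0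
  have hne : (Sum.inl u0 : W ⊕ Bool) ≠ Sum.inl v0 := by
    intro hxy
    have : u0 = v0 := by simpa using hxy
    exact hF v0 u0 hu0 (this ▸ hu0)
  have hsub : {Sum.inl u0, Sum.inl v0} ⊆ Set.range (Sum.inl : W → W ⊕ Bool) := by
    rintro x (rfl | rfl) <;> exact ⟨_, rfl⟩
  have h2 : 2 ≤ (Set.range (Sum.inl : W → W ⊕ Bool)).ncard := by
    calc 2 = ({Sum.inl u0, Sum.inl v0} : Set (W ⊕ Bool)).ncard :=
          (Set.ncard_pair hne).symm
      _ ≤ _ := Set.ncard_le_ncard hsub (Set.toFinite _)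
  have key := h (W ⊕ Bool) (extG F) (extG_oriented hF) (Sum.inr false) ?_
  · rw [extG_out_a] at key
    exact absurd key (by simp [Set.eq_empty_iff_forall_notMem])
  · constructor
    · rw [extG_out_a, extG_second_a, Set.ncard_singleton]
      omega
    · rintro (x | c) hw
      · rw [extG_out_w, extG_second_w,
          Set.ncard_insert_of_notMem (by simp) (Set.toFinite _),
          Set.ncard_insert_of_notMem (by simp) (Set.toFinite _),
          Set.ncard_image_of_injective _ Sum.inl_injective,
          Set.ncard_image_of_injective _ Sum.inl_injective] at hw
        have := hc x
        omega
      · cases c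
        · rfl
        · rw [extG_out_b, extG_second_b, Set.ncard_singleton] at hw
          omega
end

section
/- Let (x_1,...,x_n) be a median order of a tournament T, and let i < j be indices such that x_i and x_j lie in a common module I of T while x_{i+1},...,x_{j-1} all lie outside I. Then (x_1,...,x_{i-1}, x_{i+1},...,x_{j-1}, x_i, x_j, x_{j+1},...,x_n) is also a median order of T. -/
variable {V : Type*}

/-!
Let `B` be the block strictly between `x = L[i]` and `y = L[j]`. Moving `x` to just after `B`
changes the number of forward arcs by `|B → x| - |x → B|`; moving `y` to just before `B` changes
it by `|y → B| - |B → y|`. Since `B` lies outside the module containing `x` and `y`, these two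
changes are opposite, and by maximality of `L` neither is positive; so both vanish.
-/

namespace List

theorem ncard_setOf_getElem_eq_countP (P : V → Prop) [DecidablePred P] (T : List V) :
    {l : ℕ | ∃ h : l < T.length, P T[l]}.ncard = T.countP (P ·) := by
  induction T with
  | nil => simp
  | cons a T ih =>
    set S := {l : ℕ | ∃ h : l < T.length, P T[l]}
    have hS : S.Finite := (Set.finite_Iio T.length).subset fun l ⟨h, _⟩ => h
    have hshift := Set.ncard_image_of_injective S Nat.succ_injective
    by_cases ha : P a
    · have : {l : ℕ | ∃ h : l < (a :: T).length, P (a :: T)[l]} = insert 0 (Nat.succ '' S) := by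
        ext (_ | l) <;> simp [S, ha]
      rw [this, Set.ncard_insert_of_notMem (by simp) (hS.image _), hshift, ih,
        countP_cons_of_pos (by simpa using ha)]
    · have : {l : ℕ | ∃ h : l < (a :: T).length, P (a :: T)[l]} = Nat.succ '' S := by
        ext (_ | l) <;> simp [S, ha]
      rw [this, hshift, ih, countP_cons_of_neg (by simpa using ha)]

theorem eq_take_append_getElem_cons_slice_append {L : List V} {i j : ℕ} (hij : i < j)
    (hj : j < L.length) :
    L = L.take i ++ L[i] :: ((L.drop (i + 1)).take (j - i - 1) ++ L[j] :: L.drop (j + 1)) := by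
  have hslice : (L.drop (i + 1)).drop (j - i - 1) = L.drop j := by
    rw [drop_drop]; congr 1; omega
  rw [← drop_eq_getElem_cons hj, ← hslice, take_append_drop, ← drop_eq_getElem_cons,
    take_append_drop]

theorem exists_getElem_eq_of_mem_slice {L : List V} {i j : ℕ} {w : V}
    (hw : w ∈ (L.drop (i + 1)).take (j - i - 1)) :
    ∃ (l : ℕ) (hl : l < L.length), i < l ∧ l < j ∧ L[l] = w := by
  obtain ⟨k, hk, rfl⟩ := mem_iff_getElem.1 hw
  simp only [length_take, length_drop] at hk
  exact ⟨i + 1 + k, by omega, by omega, by omega, by simp⟩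

end List

section ForwardArcs

variable (E : V → V → Prop) [DecidableRel E]

theorem fwd_cons (a : V) (T : List V) : fwd E (a :: T) = T.countP (E a ·) + fwd E T := by
  set S := {p : ℕ × ℕ | p.1 < p.2 ∧ ∃ (h1 : p.1 < T.length) (h2 : p.2 < T.length),
    E T[p.1] T[p.2]}
  set F := {l : ℕ | ∃ h : l < T.length, E a T[l]}
  have hS : S.Finite := ((Set.finite_Iio T.length).prod (Set.finite_Iio T.length)).subset
    fun p ⟨_, h1, h2, _⟩ => ⟨h1, h2⟩
  have hF : F.Finite := (Set.finite_Iio T.length).subset fun l ⟨h, _⟩ => h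
  have hsplit : {p : ℕ × ℕ | p.1 < p.2 ∧ ∃ (h1 : p.1 < (a :: T).length)
      (h2 : p.2 < (a :: T).length), E (a :: T)[p.1] (a :: T)[p.2]} =
      (fun l => (0, l + 1)) '' F ∪ Prod.map Nat.succ Nat.succ '' S := by
    ext ⟨_ | m, _ | n⟩ <;> simp [S, F]
  have hdisj : Disjoint ((fun l => (0, l + 1)) '' F) (Prod.map Nat.succ Nat.succ '' S) := by
    simp [Set.disjoint_left]
  simp only [fwd, List.get_eq_getElem]
  rw [hsplit, Set.ncard_union_eq hdisj (hF.image _) (hS.image _),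
    Set.ncard_image_of_injective _ (fun _ _ h => by simpa using h),
    Set.ncard_image_of_injective _ (Nat.succ_injective.prodMap Nat.succ_injective),
    List.ncard_setOf_getElem_eq_countP]

theorem fwd_insert (x : V) (A B : List V) :
    fwd E (A ++ x :: B) = fwd E (A ++ B) + A.countP (E · x) + B.countP (E x ·) := by
  induction A with
  | nil => simp [fwd_cons, add_comm]
  | cons a A ih =>
    simp only [List.cons_append, fwd_cons, ih, List.countP_append, List.countP_cons]
    omega

theorem fwd_move_across (x : V) (A B C : List V) :
    fwd E (A ++ x :: (B ++ C)) + B.countP (E · x) =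
      fwd E (A ++ B ++ x :: C) + B.countP (E x ·) := by
  rw [fwd_insert, fwd_insert, List.countP_append, List.countP_append, List.append_assoc]
  omega

end ForwardArcs

namespace MedianOrder

variable {E : V → V → Prop} {L M : List V}

theorem fwd_le_of_perm (hL : MedianOrder E L) (hM : M.Perm L) : fwd E M ≤ fwd E L :=
  hL.2.2 M (hM.nodup_iff.2 hL.1) fun v => hM.mem_iff.2 (hL.2.1 v)

theorem of_perm_of_fwd_eq (hL : MedianOrder E L) (hM : M.Perm L) (h : fwd E M = fwd E L) :
    MedianOrder E M :=
  ⟨hM.nodup_iff.2 hL.1, fun v => hM.mem_iff.2 (hL.2.1 v), fun N hN hN' => h ▸ hL.2.2 N hN hN'⟩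

theorem move_next_to_twin {A B C : List V} {x y : V}
    (hL : MedianOrder E (A ++ x :: (B ++ y :: C)))
    (htwin : ∀ w ∈ B, (E x w ↔ E y w) ∧ (E w x ↔ E w y)) :
    MedianOrder E (A ++ B ++ x :: y :: C) := by
  classical
  have hx := fwd_move_across E x A B (y :: C)
  have hy := fwd_move_across E y (A ++ [x]) B C
  rw [show A ++ [x] ++ B ++ y :: C = A ++ x :: (B ++ y :: C) by simp] at hy
  have hout : B.countP (E y ·) = B.countP (E x ·) :=
    List.countP_congr fun w hw => by simpa using (htwin w hw).1.symm
  have hin : B.countP (E · y) = B.countP (E · x) :=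
    List.countP_congr fun w hw => by simpa using (htwin w hw).2.symm
  have hpx : (A ++ B ++ x :: y :: C).Perm (A ++ x :: (B ++ y :: C)) := by
    rw [List.append_assoc]; exact List.perm_middle.append_left A
  have hpy : (A ++ [x] ++ y :: (B ++ C)).Perm (A ++ x :: (B ++ y :: C)) := by
    simpa using List.perm_middle.symm.append_left (A ++ [x])
  have hx_le := hL.fwd_le_of_perm hpx
  have hy_le := hL.fwd_le_of_perm hpy
  exact hL.of_perm_of_fwd_eq hpx (by omega)

end MedianOrder

theorem stmt17_general (E : V → V → Prop)
    (L : List V) (hL : MedianOrder E L) (I : Set V) (hI : IsModule E I)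
    {i j : ℕ} (hi : i < L.length) (hj : j < L.length) (hij : i < j)
    (hxi : L.get ⟨i, hi⟩ ∈ I) (hxj : L.get ⟨j, hj⟩ ∈ I)
    (hbetween : ∀ l (hl : l < L.length), i < l → l < j → L.get ⟨l, hl⟩ ∉ I) :
    MedianOrder E (L.take i ++ (L.drop (i + 1)).take (j - i - 1)
      ++ [L.get ⟨i, hi⟩] ++ L.drop j) := by
  rw [List.eq_take_append_getElem_cons_slice_append hij hj] at hL
  rw [List.drop_eq_getElem_cons hj, List.append_assoc _ [_], List.singleton_append]
  refine hL.move_next_to_twin fun w hw => ?_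
  obtain ⟨l, hl, hil, hlj, rfl⟩ := List.exists_getElem_eq_of_mem_slice hw
  exact hI _ hxi _ hxj _ (hbetween l hl hil hlj)

theorem stmt17 [Fintype V] (E : V → V → Prop) (hT : Tournament E)
    (L : List V) (hL : MedianOrder E L) (I : Set V) (hI : IsModule E I)
    {i j : ℕ} (hi : i < L.length) (hj : j < L.length) (hij : i < j)
    (hxi : L.get ⟨i, hi⟩ ∈ I) (hxj : L.get ⟨j, hj⟩ ∈ I)
    (hbetween : ∀ l (hl : l < L.length), i < l → l < j → L.get ⟨l, hl⟩ ∉ I) :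
    MedianOrder E (L.take i ++ (L.drop (i + 1)).take (j - i - 1)
      ++ [L.get ⟨i, hi⟩] ++ L.drop j) :=
  stmt17_general E L hL I hI hi hj hij hxi hxj hbetween
end
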